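/- Let A be a finite dimensional algebra over an algebraically closed field and W a finite dimensional central A-bimodule. If ξ : w' → w → w'' is a non-split conflation in the bimodule category W-el, then there exists a conflation w' ⊕ w'' → w ⊕ w'' → w'', and dim End_W(w) < dim End_W(w' ⊕ w''). -/

import Mathlib

/-!
Since `P''` is projective, `ξ` splits as a sequence of `A`-modules. An `A`-linear retraction of `α`
makes `1 ⊗ α` a split monomorphism, so `Hom_W(v, -)` is left exact on `ξ`; `Hom_W(-, u)` is left
exact on `ξ` because `β` is surjective. Counting dimensions,
* `dim End(w) ≤ dim Hom(w'', w) + dim Hom(w', w)`,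
* `dim Hom(w', w) ≤ dim Hom(w', w') + dim Hom(w', w'')`,
* `dim Hom(w'', w) < dim Hom(w'', w') + dim End(w'')`,
the last one strictly because a preimage of `1_{w''}` under `β ∘ -` would split `ξ`. The four terms
on the right are the blocks of `End(w' ⊕ w'')`. The new conflation is `α ⊕ 1` followed by `β ∘ pr₁`.
-/

set_option linter.unusedSectionVars false

noncomputable section

section WEl

variable (k A W : Type) [Field k] [Ring A] [Algebra k A]
  [AddCommGroup W] [Module k W] [Module A W] [Module Aᵐᵒᵖ W]
  [SMulCommClass A Aᵐᵒᵖ W] [IsScalarTower k A W]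

variable (P : Type) [AddCommGroup P] [Module k P] [Module A P] [IsScalarTower k A P]

/-- The defining relations of the tensor product `W ⊗_A P`. -/
def wrel : Submodule k (TensorProduct k W P) :=
  Submodule.span k {x | ∃ (a : A) (v : W) (p : P),
    x = (MulOpposite.op a • v) ⊗ₜ[k] p - v ⊗ₜ[k] (a • p)}

/-- The tensor product `W ⊗_A P` over the (noncommutative) algebra `A`. -/
abbrev WT := TensorProduct k W P ⧸ wrel k A W P

/-- The elementary tensor `v ⊗ p` of `W ⊗_A P`. -/
def wmk (v : W) (p : P) : WT k A W P := Submodule.Quotient.mk (v ⊗ₜ[k] p)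

/-- Left multiplication by `a : A` on `W`, as a `k`-linear map. -/
def smulW (a : A) : W →ₗ[k] W where
  toFun := (a • ·)
  map_add' := smul_add a
  map_smul' c v := by
    simp only [RingHom.id_apply]
    rw [← algebraMap_smul A c v, ← algebraMap_smul A c (a • v), smul_smul, smul_smul,
      Algebra.commutes]

/-- The left `A`-action on `W ⊗_A P` (through the left action on `W`). -/
def tau (a : A) : WT k A W P →ₗ[k] WT k A W P :=
  Submodule.mapQ _ _ (LinearMap.rTensor P (smulW k A W a)) (by
    rw [wrel, Submodule.span_le]
    rintro x ⟨b, v, p, rfl⟩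
    have : (LinearMap.rTensor P (smulW k A W a))
        ((MulOpposite.op b • v) ⊗ₜ[k] p - v ⊗ₜ[k] (b • p))
        = (MulOpposite.op b • (a • v)) ⊗ₜ[k] p - (a • v) ⊗ₜ[k] (b • p) := by
      simp [smulW, smul_comm]
    rw [SetLike.mem_coe, Submodule.mem_comap, this]
    exact Submodule.subset_span ⟨b, a • v, p, rfl⟩)

lemma ksmul_comm {M : Type} [AddCommGroup M] [Module k M] [Module A M]
    [IsScalarTower k A M] (c : k) (a : A) (x : M) : c • a • x = a • c • x := by
  rw [← algebraMap_smul A c (a • x), ← algebraMap_smul A c x, smul_smul, smul_smul,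
    Algebra.commutes]

variable {P}
variable {P' : Type} [AddCommGroup P'] [Module k P'] [Module A P'] [IsScalarTower k A P']

/-- The map `1_W ⊗ α : W ⊗_A P → W ⊗_A P'` induced by an `A`-linear map `α`. -/
def tmap (α : P →ₗ[k] P') (hα : ∀ (a : A) (p : P), α (a • p) = a • α p) :
    WT k A W P →ₗ[k] WT k A W P' :=
  Submodule.mapQ _ _ (LinearMap.lTensor W α) (by
    rw [wrel, Submodule.span_le]
    rintro x ⟨b, v, p, rfl⟩
    have : (LinearMap.lTensor W α)
        ((MulOpposite.op b • v) ⊗ₜ[k] p - v ⊗ₜ[k] (b • p))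
        = (MulOpposite.op b • v) ⊗ₜ[k] (α p) - v ⊗ₜ[k] (b • α p) := by
      simp [hα]
    rw [SetLike.mem_coe, Submodule.mem_comap, this]
    exact Submodule.subset_span ⟨b, v, α p, rfl⟩)

lemma tmap_mk (α : P →ₗ[k] P') (hα : ∀ (a : A) (p : P), α (a • p) = a • α p)
    (v : W) (p : P) : tmap k A W α hα (wmk k A W P v p) = wmk k A W P' v (α p) := by
  simp [tmap, wmk, Submodule.mapQ_apply]

/-- The space of morphisms `(P, w) → (P', w')` in the bimodule category `W-el`:
`A`-linear maps `α : P → P'` with `(1 ⊗ α) ∘ w = w' ∘ α`. -/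
def HomW (w : P →ₗ[k] WT k A W P) (w' : P' →ₗ[k] WT k A W P') :
    Submodule k (P →ₗ[k] P') where
  carrier := {α | ∃ h : ∀ (a : A) (p : P), α (a • p) = a • α p,
    (tmap k A W α h).comp w = w'.comp α}
  add_mem' := by
    rintro α β ⟨hα, cα⟩ ⟨hβ, cβ⟩
    refine ⟨fun a p => by simp [hα, hβ, smul_add], ?_⟩
    have he : ∀ h', tmap k A W (α + β) h' = tmap k A W α hα + tmap k A W β hβ := by
      intro h'
      apply LinearMap.ext
      intro x
      obtain ⟨y, rfl⟩ := Submodule.Quotient.mk_surjective _ x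
      simp [tmap, Submodule.mapQ_apply]
    rw [he]
    ext p
    have h1 := LinearMap.congr_fun cα p
    have h2 := LinearMap.congr_fun cβ p
    simp only [LinearMap.add_apply, LinearMap.comp_apply] at *
    rw [h1, h2, map_add]
  zero_mem' := by
    refine ⟨fun a p => by simp, ?_⟩
    have he : ∀ h', tmap k A W (0 : P →ₗ[k] P') h' = 0 := by
      intro h'
      apply LinearMap.ext
      intro x
      obtain ⟨y, rfl⟩ := Submodule.Quotient.mk_surjective _ x
      simp [tmap, Submodule.mapQ_apply]
    rw [he]
    ext p; simp
  smul_mem' := by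
    rintro c α ⟨hα, cα⟩
    refine ⟨fun a p => by simp only [LinearMap.smul_apply, hα]; rw [ksmul_comm k A], ?_⟩
    have he : ∀ h', tmap k A W (c • α) h' = c • tmap k A W α hα := by
      intro h'
      apply LinearMap.ext
      intro x
      obtain ⟨y, rfl⟩ := Submodule.Quotient.mk_surjective _ x
      simp [tmap, Submodule.mapQ_apply]
    rw [he]
    ext p
    have h1 := LinearMap.congr_fun cα p
    simp only [LinearMap.smul_apply, LinearMap.comp_apply] at *
    rw [h1, map_smul]

/-- `w` is an element of the bimodule `W` over `P`, i.e. `w : P → W ⊗_A P` is `A`-linear. -/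
def IsEl (w : P →ₗ[k] WT k A W P) : Prop :=
  ∀ (a : A) (p : P), w (a • p) = tau k A W P a (w p)

variable {Q : Type} [AddCommGroup Q] [Module k Q] [Module A Q] [IsScalarTower k A Q]

/-- The direct sum `w ⊕ v` of two elements, an element over `P × Q`. -/
def dsumEl (w : P →ₗ[k] WT k A W P) (v : Q →ₗ[k] WT k A W Q) :
    (P × Q) →ₗ[k] WT k A W (P × Q) :=
  (tmap k A W (LinearMap.inl k P Q) (fun a p => by ext <;> simp)).comp
      (w.comp (LinearMap.fst k P Q))
    + (tmap k A W (LinearMap.inr k P Q) (fun a q => by ext <;> simp)).comp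
      (v.comp (LinearMap.snd k P Q))

end WEl

theorem Function.Exact.exists_leftInverse_of_projective {R M N P : Type*} [Ring R]
    [AddCommGroup M] [AddCommGroup N] [AddCommGroup P] [Module R M] [Module R N] [Module R P]
    [Module.Projective R P] {f : M →ₗ[R] N} {g : N →ₗ[R] P} (h : Function.Exact f g)
    (hf : Function.Injective f) (hg : Function.Surjective g) :
    ∃ l : N →ₗ[R] M, l ∘ₗ f = LinearMap.id := by
  obtain ⟨s, hs⟩ := g.exists_rightInverse_of_surjective (LinearMap.range_eq_top.2 hg)
  exact ((h.split_tfae hf hg).out 0 1 rfl rfl).mp ⟨s, hs⟩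

theorem LinearMap.finrank_le_add_of_ker_le_range {K M N V : Type*} [Field K]
    [AddCommGroup M] [AddCommGroup N] [AddCommGroup V] [Module K M] [Module K N] [Module K V]
    [FiniteDimensional K M] [FiniteDimensional K N] [FiniteDimensional K V]
    (g : V →ₗ[K] M) (f : M →ₗ[K] N) (h : ker f ≤ range g) :
    Module.finrank K M ≤ Module.finrank K V + Module.finrank K N := by
  have hker : Module.finrank K (ker f) ≤ Module.finrank K V :=
    (Submodule.finrank_mono h).trans g.finrank_range_le
  have := f.finrank_range_add_finrank_ker
  have := (range f).finrank_le
  omega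

theorem LinearMap.finrank_lt_add_of_ker_le_range {K M N V : Type*} [Field K]
    [AddCommGroup M] [AddCommGroup N] [AddCommGroup V] [Module K M] [Module K N] [Module K V]
    [FiniteDimensional K M] [FiniteDimensional K N] [FiniteDimensional K V]
    (g : V →ₗ[K] M) (f : M →ₗ[K] N) (h : ker f ≤ range g) (hf : ¬ Function.Surjective f) :
    Module.finrank K M < Module.finrank K V + Module.finrank K N := by
  have hker : Module.finrank K (ker f) ≤ Module.finrank K V :=
    (Submodule.finrank_mono h).trans g.finrank_range_le
  have := f.finrank_range_add_finrank_ker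
  have := Submodule.finrank_lt (range_eq_top.not.mpr hf)
  omega

section TensorMap

variable {k A W : Type} [Field k] [Ring A] [AddCommGroup W] [Module k W] [Module Aᵐᵒᵖ W]
  {P P' P'' : Type} [AddCommGroup P] [Module k P] [Module A P]
  [AddCommGroup P'] [Module k P'] [Module A P'] [AddCommGroup P''] [Module k P''] [Module A P'']

theorem WT.hom_ext {M : Type} [AddCommGroup M] [Module k M] {f g : WT k A W P →ₗ[k] M}
    (h : ∀ v p, f (wmk k A W P v p) = g (wmk k A W P v p)) : f = g :=
  Submodule.linearMap_qext _ (TensorProduct.ext' h)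

theorem tmap_tmap {α : P →ₗ[k] P'} (hα : ∀ (a : A) p, α (a • p) = a • α p)
    {β : P' →ₗ[k] P''} (hβ : ∀ (a : A) p, β (a • p) = a • β p) (x : WT k A W P) :
    tmap k A W β hβ (tmap k A W α hα x)
      = tmap k A W (β ∘ₗ α) (fun a p => by simp only [LinearMap.comp_apply, hα, hβ]) x := by
  refine LinearMap.congr_fun (WT.hom_ext (f := tmap k A W β hβ ∘ₗ tmap k A W α hα)
    fun v p => ?_) x
  rfl

theorem tmap_tmap_of_leftInverse {α : P →ₗ[k] P'} (hα : ∀ (a : A) p, α (a • p) = a • α p)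
    {ρ : P' →ₗ[k] P} (hρ : ∀ (a : A) p, ρ (a • p) = a • ρ p) (h : ∀ p, ρ (α p) = p)
    (x : WT k A W P) : tmap k A W ρ hρ (tmap k A W α hα x) = x := by
  refine LinearMap.congr_fun (WT.hom_ext (f := tmap k A W ρ hρ ∘ₗ tmap k A W α hα)
    (g := LinearMap.id) fun v p => ?_) x
  change wmk k A W P v (ρ (α p)) = wmk k A W P v p
  rw [h]

theorem tmap_tmap_of_comp_eq_zero {α : P →ₗ[k] P'} (hα : ∀ (a : A) p, α (a • p) = a • α p)
    {β : P' →ₗ[k] P''} (hβ : ∀ (a : A) p, β (a • p) = a • β p) (h : ∀ p, β (α p) = 0)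
    (x : WT k A W P) : tmap k A W β hβ (tmap k A W α hα x) = 0 := by
  refine LinearMap.congr_fun (WT.hom_ext (f := tmap k A W β hβ ∘ₗ tmap k A W α hα)
    (g := 0) fun v p => ?_) x
  change wmk k A W P'' v (β (α p)) = 0
  simp [h, wmk]

end TensorMap

section WEl

variable {k A W : Type} [Field k] [Ring A] [Algebra k A]
  [AddCommGroup W] [Module k W] [Module Aᵐᵒᵖ W]
  {P P' P'' Q U : Type}
  [AddCommGroup P] [Module k P] [Module A P] [IsScalarTower k A P]
  [AddCommGroup P'] [Module k P'] [Module A P'] [IsScalarTower k A P']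
  [AddCommGroup P''] [Module k P''] [Module A P''] [IsScalarTower k A P'']
  [AddCommGroup Q] [Module k Q] [Module A Q] [IsScalarTower k A Q]
  [AddCommGroup U] [Module k U] [Module A U] [IsScalarTower k A U]

namespace HomW

variable {w : P →ₗ[k] WT k A W P} {w' : P' →ₗ[k] WT k A W P'} {w'' : P'' →ₗ[k] WT k A W P''}
  {v : Q →ₗ[k] WT k A W Q} {u : U →ₗ[k] WT k A W U}

omit [IsScalarTower k A P] in
theorem map_smul {α : P →ₗ[k] P'} (hα : α ∈ HomW k A W w w') (a : A) (p : P) :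
    α (a • p) = a • α p :=
  hα.1 a p

omit [IsScalarTower k A P] in
theorem tmap_apply {α : P →ₗ[k] P'} (hα : α ∈ HomW k A W w w') (p : P) :
    tmap k A W α (HomW.map_smul hα) (w p) = w' (α p) :=
  LinearMap.congr_fun hα.2 p

omit [IsScalarTower k A P] in
theorem mem_of_tmap_apply {α : P →ₗ[k] P'} (hα : ∀ (a : A) p, α (a • p) = a • α p)
    (h : ∀ p, tmap k A W α hα (w p) = w' (α p)) : α ∈ HomW k A W w w' :=
  ⟨hα, LinearMap.ext h⟩

def toLinearMap {α : P →ₗ[k] P'} (hα : α ∈ HomW k A W w w') : P →ₗ[A] P' where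
  toFun := α
  map_add' := α.map_add
  map_smul' := HomW.map_smul hα

theorem id_mem (w : P →ₗ[k] WT k A W P) : LinearMap.id ∈ HomW k A W w w :=
  mem_of_tmap_apply (fun _ _ => rfl) fun p =>
    LinearMap.congr_fun (WT.hom_ext (f := tmap k A W LinearMap.id fun _ _ => rfl)
      (g := LinearMap.id) fun _ _ => rfl) (w p)

omit [IsScalarTower k A Q] in
theorem comp_mem {φ : Q →ₗ[k] P} {ψ : P →ₗ[k] P'} (hφ : φ ∈ HomW k A W v w)
    (hψ : ψ ∈ HomW k A W w w') : ψ ∘ₗ φ ∈ HomW k A W v w' :=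
  mem_of_tmap_apply _ fun q => by
    rw [LinearMap.comp_apply, ← tmap_tmap (HomW.map_smul hφ) (HomW.map_smul hψ),
      HomW.tmap_apply hφ, HomW.tmap_apply hψ]

theorem inl_mem (w : P →ₗ[k] WT k A W P) (v : Q →ₗ[k] WT k A W Q) :
    LinearMap.inl k P Q ∈ HomW k A W w (dsumEl k A W w v) :=
  mem_of_tmap_apply (fun _ _ => by ext <;> simp) fun p => by simp [dsumEl]

theorem inr_mem (w : P →ₗ[k] WT k A W P) (v : Q →ₗ[k] WT k A W Q) :
    LinearMap.inr k P Q ∈ HomW k A W v (dsumEl k A W w v) :=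
  mem_of_tmap_apply (fun _ _ => by ext <;> simp) fun q => by simp [dsumEl]

omit [IsScalarTower k A Q] in
theorem fst_mem (w : P →ₗ[k] WT k A W P) (v : Q →ₗ[k] WT k A W Q) :
    LinearMap.fst k P Q ∈ HomW k A W (dsumEl k A W w v) w :=
  mem_of_tmap_apply (fun _ _ => rfl) fun x => by
    simp only [dsumEl, LinearMap.add_apply, map_add, LinearMap.comp_apply]
    erw [tmap_tmap_of_leftInverse _ _ fun _ => rfl, tmap_tmap_of_comp_eq_zero _ _ fun _ => rfl,
      add_zero]

omit [IsScalarTower k A P] in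
theorem snd_mem (w : P →ₗ[k] WT k A W P) (v : Q →ₗ[k] WT k A W Q) :
    LinearMap.snd k P Q ∈ HomW k A W (dsumEl k A W w v) v :=
  mem_of_tmap_apply (fun _ _ => rfl) fun x => by
    simp only [dsumEl, LinearMap.add_apply, map_add, LinearMap.comp_apply]
    erw [tmap_tmap_of_comp_eq_zero _ _ fun _ => rfl, tmap_tmap_of_leftInverse _ _ fun _ => rfl,
      zero_add]

omit [IsScalarTower k A U] in
theorem prod_mem {f : U →ₗ[k] P} {g : U →ₗ[k] Q} (hf : f ∈ HomW k A W u w)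
    (hg : g ∈ HomW k A W u v) : f.prod g ∈ HomW k A W u (dsumEl k A W w v) := by
  have : f.prod g = LinearMap.inl k P Q ∘ₗ f + LinearMap.inr k P Q ∘ₗ g := by ext <;> simp
  rw [this]
  exact add_mem (comp_mem hf (inl_mem w v)) (comp_mem hg (inr_mem w v))

theorem coprod_mem {f : P →ₗ[k] U} {g : Q →ₗ[k] U} (hf : f ∈ HomW k A W w u)
    (hg : g ∈ HomW k A W v u) : f.coprod g ∈ HomW k A W (dsumEl k A W w v) u := by
  have : f.coprod g = f ∘ₗ LinearMap.fst k P Q + g ∘ₗ LinearMap.snd k P Q := by ext <;> simp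
  rw [this]
  exact add_mem (comp_mem (fst_mem w v) hf) (comp_mem (snd_mem w v) hg)

theorem prodMap_mem {f : P →ₗ[k] P'} {g : Q →ₗ[k] U} (hf : f ∈ HomW k A W w w')
    (hg : g ∈ HomW k A W v u) :
    f.prodMap g ∈ HomW k A W (dsumEl k A W w v) (dsumEl k A W w' u) :=
  prod_mem (comp_mem (fst_mem w v) hf) (comp_mem (snd_mem w v) hg)

def postcomp {ψ : P →ₗ[k] P'} (hψ : ψ ∈ HomW k A W w w') (v : Q →ₗ[k] WT k A W Q) :
    HomW k A W v w →ₗ[k] HomW k A W v w' :=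
  (LinearMap.llcomp k Q P P' ψ).restrict fun _ hφ => comp_mem hφ hψ

def precomp {φ : Q →ₗ[k] P} (hφ : φ ∈ HomW k A W v w) (u : U →ₗ[k] WT k A W U) :
    HomW k A W w u →ₗ[k] HomW k A W v u :=
  (LinearMap.lcomp k U φ).restrict fun _ hψ => comp_mem hφ hψ

omit [IsScalarTower k A Q] in
@[simp]
theorem coe_postcomp_apply {ψ : P →ₗ[k] P'} (hψ : ψ ∈ HomW k A W w w')
    (φ : HomW k A W v w) : (postcomp hψ v φ : Q →ₗ[k] P') = ψ ∘ₗ φ :=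
  rfl

omit [IsScalarTower k A Q] in
@[simp]
theorem coe_precomp_apply {φ : Q →ₗ[k] P} (hφ : φ ∈ HomW k A W v w) (ψ : HomW k A W w u) :
    (precomp hφ u ψ : Q →ₗ[k] U) = ψ ∘ₗ φ :=
  rfl

/- `W ⊗_A -` does not preserve injectivity in general; the `A`-linear retraction `ρ` makes
`1 ⊗ α` a split monomorphism, which is what allows cancelling it. -/
omit [IsScalarTower k A Q] in
theorem mem_of_comp_mem_of_leftInverse {α : P' →ₗ[k] P} (hα : α ∈ HomW k A W w' w)
    (ρ : P →ₗ[A] P') (hρ : ∀ p, ρ (α p) = p) {ψ : Q →ₗ[k] P'}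
    (h : α ∘ₗ ψ ∈ HomW k A W v w) : ψ ∈ HomW k A W v w' := by
  have hψ (a : A) (q : Q) : ψ (a • q) = a • ψ q := by
    rw [← hρ (ψ (a • q)), ← LinearMap.comp_apply α ψ, HomW.map_smul h, ρ.map_smul,
      LinearMap.comp_apply, hρ]
  have hρα := tmap_tmap_of_leftInverse (W := W) (HomW.map_smul hα) (ρ := ρ.restrictScalars k)
    ρ.map_smul hρ
  refine mem_of_tmap_apply hψ fun q => ?_
  rw [← hρα (tmap k A W ψ hψ (v q)), tmap_tmap hψ (HomW.map_smul hα), HomW.tmap_apply h,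
    LinearMap.comp_apply, ← HomW.tmap_apply hα, hρα]

omit [IsScalarTower k A P] in
theorem mem_of_comp_mem_of_surjective {β : P →ₗ[k] P''} (hβ : β ∈ HomW k A W w w'')
    (hβs : Function.Surjective β) {χ : P'' →ₗ[k] U} (h : χ ∘ₗ β ∈ HomW k A W w u) :
    χ ∈ HomW k A W w'' u := by
  have hχ (a : A) (p'' : P'') : χ (a • p'') = a • χ p'' := by
    obtain ⟨p, rfl⟩ := hβs p''
    rw [← HomW.map_smul hβ, ← LinearMap.comp_apply χ β, HomW.map_smul h, LinearMap.comp_apply]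
  refine mem_of_tmap_apply hχ fun p'' => ?_
  obtain ⟨p, rfl⟩ := hβs p''
  rw [← HomW.tmap_apply hβ, tmap_tmap (HomW.map_smul hβ) hχ, HomW.tmap_apply h,
    LinearMap.comp_apply]

omit [IsScalarTower k A Q] in
theorem ker_postcomp_le_range_postcomp {α : P' →ₗ[k] P} (hα : α ∈ HomW k A W w' w)
    (ρ : P →ₗ[A] P') (hρ : ∀ p, ρ (α p) = p) {β : P →ₗ[k] P''} (hβ : β ∈ HomW k A W w w'')
    (hexact : LinearMap.ker β ≤ LinearMap.range α) (v : Q →ₗ[k] WT k A W Q) :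
    LinearMap.ker (postcomp hβ v) ≤ LinearMap.range (postcomp hα v) := by
  rintro ⟨φ, hφ⟩ hφ0
  have hβφ : ∀ q, β (φ q) = 0 := LinearMap.congr_fun (congrArg Subtype.val hφ0)
  have hfac : α ∘ₗ ρ.restrictScalars k ∘ₗ φ = φ := by
    ext q
    obtain ⟨p', hp'⟩ := hexact (hβφ q)
    change α (ρ (φ q)) = φ q
    rw [← hp', hρ]
  exact ⟨⟨ρ.restrictScalars k ∘ₗ φ, mem_of_comp_mem_of_leftInverse hα ρ hρ (by rwa [hfac])⟩,
    Subtype.ext hfac⟩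

omit [IsScalarTower k A P'] in
theorem ker_precomp_le_range_precomp {α : P' →ₗ[k] P} (hα : α ∈ HomW k A W w' w)
    {β : P →ₗ[k] P''} (hβ : β ∈ HomW k A W w w'') (hβs : Function.Surjective β)
    (hexact : LinearMap.ker β ≤ LinearMap.range α) (u : U →ₗ[k] WT k A W U) :
    LinearMap.ker (precomp hα u) ≤ LinearMap.range (precomp hβ u) := by
  rintro ⟨φ, hφ⟩ hφ0
  have hφα : ∀ p', φ (α p') = 0 := LinearMap.congr_fun (congrArg Subtype.val hφ0)
  -- `σ` is only `k`-linear; `A`-linearity of `φ ∘ σ` follows from the surjectivity of `β`.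
  obtain ⟨σ, hσ⟩ := β.exists_rightInverse_of_surjective (LinearMap.range_eq_top.2 hβs)
  have hfac : (φ ∘ₗ σ) ∘ₗ β = φ := by
    ext p
    have hβσ : β (σ (β p)) = β p := LinearMap.congr_fun hσ (β p)
    obtain ⟨p', hp'⟩ := hexact (x := σ (β p) - p) (by simp [hβσ])
    have := hφα p'
    rwa [hp', map_sub, sub_eq_zero] at this
  exact ⟨⟨φ ∘ₗ σ, mem_of_comp_mem_of_surjective hβ hβs (by rwa [hfac])⟩, Subtype.ext hfac⟩

theorem exists_leftInverse_of_rightInverse {α : P' →ₗ[k] P} (hα : α ∈ HomW k A W w' w)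
    (ρ : P →ₗ[A] P') (hρ : ∀ p, ρ (α p) = p) {β : P →ₗ[k] P''} (hβ : β ∈ HomW k A W w w'')
    (hexact : LinearMap.range α = LinearMap.ker β) {φ : P'' →ₗ[k] P}
    (hφ : φ ∈ HomW k A W w'' w) (hβφ : β ∘ₗ φ = LinearMap.id) :
    ∃ α' : P →ₗ[k] P', α' ∈ HomW k A W w w' ∧ α'.comp α = LinearMap.id := by
  have hβα (p' : P') : β (α p') = 0 := hexact.le ⟨p', rfl⟩
  let e : P →ₗ[k] P := LinearMap.id - φ ∘ₗ β
  have he : e ∈ HomW k A W w w := sub_mem (id_mem w) (comp_mem hβ hφ)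
  have hβe : (⟨e, he⟩ : HomW k A W w w) ∈ LinearMap.ker (postcomp hβ w) := by
    refine Subtype.ext (LinearMap.ext fun p => ?_)
    have : β (φ (β p)) = β p := LinearMap.congr_fun hβφ (β p)
    simp [e, this]
  obtain ⟨⟨ψ, hψ⟩, hψe⟩ := ker_postcomp_le_range_postcomp hα ρ hρ hβ hexact.ge w hβe
  have hαψ (p : P) : α (ψ p) = e p := LinearMap.congr_fun (congrArg Subtype.val hψe) p
  refine ⟨ψ, hψ, LinearMap.ext fun p' => ?_⟩
  rw [LinearMap.comp_apply, LinearMap.id_apply, ← hρ (ψ (α p')), hαψ]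
  simp [e, hβα, hρ]

omit [IsScalarTower k A P'] in
theorem exists_retraction_of_projective [Module.Projective A P''] {α : P' →ₗ[k] P}
    (hα : α ∈ HomW k A W w' w) {β : P →ₗ[k] P''} (hβ : β ∈ HomW k A W w w'')
    (hαi : Function.Injective α) (hβs : Function.Surjective β)
    (hexact : LinearMap.range α = LinearMap.ker β) :
    ∃ ρ : P →ₗ[A] P', ∀ p', ρ (α p') = p' := by
  obtain ⟨ρ, hρ⟩ := Function.Exact.exists_leftInverse_of_projective
    (f := toLinearMap hα) (g := toLinearMap hβ) (fun p => (SetLike.ext_iff.mp hexact p).symm)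
    hαi hβs
  exact ⟨ρ, LinearMap.congr_fun hρ⟩

theorem exists_conflation_dsumEl {α : P' →ₗ[k] P} (hα : α ∈ HomW k A W w' w)
    {β : P →ₗ[k] P''} (hβ : β ∈ HomW k A W w w'') (hαi : Function.Injective α)
    (hβs : Function.Surjective β) (hexact : LinearMap.range α = LinearMap.ker β)
    (v : Q →ₗ[k] WT k A W Q) :
    ∃ (γ : (P' × Q) →ₗ[k] P × Q) (δ : (P × Q) →ₗ[k] P''),
      γ ∈ HomW k A W (dsumEl k A W w' v) (dsumEl k A W w v) ∧
      δ ∈ HomW k A W (dsumEl k A W w v) w'' ∧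
      Function.Injective γ ∧ Function.Surjective δ ∧
      LinearMap.range γ = LinearMap.ker δ := by
  refine ⟨α.prodMap LinearMap.id, β ∘ₗ LinearMap.fst k P Q, prodMap_mem hα (id_mem v),
    comp_mem (fst_mem w v) hβ, hαi.prodMap Function.injective_id,
    hβs.comp Prod.fst_surjective, ?_⟩
  rw [LinearMap.range_prodMap, LinearMap.ker_comp, ← hexact, LinearMap.range_id]
  ext x
  simp

variable [Module.Finite k P] [Module.Finite k Q] [Module.Finite k U]

theorem finrank_add_finrank_le_finrank_dsumEl_source (w : P →ₗ[k] WT k A W P)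
    (v : Q →ₗ[k] WT k A W Q) (u : U →ₗ[k] WT k A W U) :
    Module.finrank k (HomW k A W w u) + Module.finrank k (HomW k A W v u)
      ≤ Module.finrank k (HomW k A W (dsumEl k A W w v) u) := by
  rw [← Module.finrank_prod]
  refine LinearMap.finrank_le_finrank_of_injective (f := LinearMap.codRestrict _
    ((LinearMap.coprodEquiv k).toLinearMap ∘ₗ (HomW k A W w u).subtype.prodMap
      (HomW k A W v u).subtype) fun x => coprod_mem x.1.2 x.2.2) ?_
  exact (LinearMap.injective_codRestrict_iff _).2 <| (LinearMap.coprodEquiv k).injective.comp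
    (Subtype.val_injective.prodMap Subtype.val_injective)

omit [IsScalarTower k A U] in
theorem finrank_add_finrank_le_finrank_dsumEl_target (w : P →ₗ[k] WT k A W P)
    (v : Q →ₗ[k] WT k A W Q) (u : U →ₗ[k] WT k A W U) :
    Module.finrank k (HomW k A W u w) + Module.finrank k (HomW k A W u v)
      ≤ Module.finrank k (HomW k A W u (dsumEl k A W w v)) := by
  rw [← Module.finrank_prod]
  refine LinearMap.finrank_le_finrank_of_injective (f := LinearMap.codRestrict _
    ((LinearMap.prodEquiv k).toLinearMap ∘ₗ (HomW k A W u w).subtype.prodMap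
      (HomW k A W u v).subtype) fun x => prod_mem x.1.2 x.2.2) ?_
  exact (LinearMap.injective_codRestrict_iff _).2 <| (LinearMap.prodEquiv k).injective.comp
    (Subtype.val_injective.prodMap Subtype.val_injective)

end HomW

end WEl

theorem stmt6_general
    (k A W : Type) [Field k] [Ring A] [Algebra k A] [FiniteDimensional k A]
    [AddCommGroup W] [Module k W] [Module Aᵐᵒᵖ W]
    (P P' P'' : Type)
    [AddCommGroup P] [Module k P] [Module A P] [IsScalarTower k A P]
    [AddCommGroup P'] [Module k P'] [Module A P'] [IsScalarTower k A P']
    [AddCommGroup P''] [Module k P''] [Module A P''] [IsScalarTower k A P'']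
    (hPfg : Module.Finite A P)
    (hP'fg : Module.Finite A P')
    (hP''fg : Module.Finite A P'') (hP''proj : Module.Projective A P'')
    (w : P →ₗ[k] WT k A W P)
    (w' : P' →ₗ[k] WT k A W P')
    (w'' : P'' →ₗ[k] WT k A W P'')
    (α : P' →ₗ[k] P) (hα : α ∈ HomW k A W w' w)
    (β : P →ₗ[k] P'') (hβ : β ∈ HomW k A W w w'')
    (hainj : Function.Injective α) (hbsurj : Function.Surjective β)
    (hexact : LinearMap.range α = LinearMap.ker β)
    (hnonsplit : ¬ ∃ α' : P →ₗ[k] P', α' ∈ HomW k A W w w' ∧ α'.comp α = LinearMap.id) :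
    (∃ (γ : (P' × P'') →ₗ[k] P × P'') (δ : (P × P'') →ₗ[k] P''),
      γ ∈ HomW k A W (dsumEl k A W w' w'') (dsumEl k A W w w'') ∧
      δ ∈ HomW k A W (dsumEl k A W w w'') w'' ∧
      Function.Injective γ ∧ Function.Surjective δ ∧
      LinearMap.range γ = LinearMap.ker δ) ∧
    Module.finrank k (HomW k A W w w)
      < Module.finrank k (HomW k A W (dsumEl k A W w' w'') (dsumEl k A W w' w'')) := by
  have : Module.Finite k P := .trans A P
  have : Module.Finite k P' := .trans A P'
  have : Module.Finite k P'' := .trans A P''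
  refine ⟨HomW.exists_conflation_dsumEl hα hβ hainj hbsurj hexact w'', ?_⟩
  obtain ⟨ρ, hρ⟩ := HomW.exists_retraction_of_projective hα hβ hainj hbsurj hexact
  have hstrict : ¬ Function.Surjective (HomW.postcomp hβ w'') := fun hsurj => hnonsplit <| by
    obtain ⟨⟨φ, hφ⟩, hφid⟩ := hsurj ⟨LinearMap.id, HomW.id_mem w''⟩
    exact HomW.exists_leftInverse_of_rightInverse hα ρ hρ hβ hexact hφ
      (congrArg Subtype.val hφid)
  have hw := (HomW.precomp hβ w).finrank_le_add_of_ker_le_range (HomW.precomp hα w)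
    (HomW.ker_precomp_le_range_precomp hα hβ hbsurj hexact.ge w)
  have hw'w := (HomW.postcomp hα w').finrank_le_add_of_ker_le_range (HomW.postcomp hβ w')
    (HomW.ker_postcomp_le_range_postcomp hα ρ hρ hβ hexact.ge w')
  have hw''w := (HomW.postcomp hα w'').finrank_lt_add_of_ker_le_range (HomW.postcomp hβ w'')
    (HomW.ker_postcomp_le_range_postcomp hα ρ hρ hβ hexact.ge w'') hstrict
  have hsum := HomW.finrank_add_finrank_le_finrank_dsumEl_source w' w'' (dsumEl k A W w' w'')
  have hsum' := HomW.finrank_add_finrank_le_finrank_dsumEl_target w' w'' w'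
  have hsum'' := HomW.finrank_add_finrank_le_finrank_dsumEl_target w' w'' w''
  omega

/-- in the bimodule category `W-el` of a finite dimensional central bimodule
over a finite dimensional algebra over an algebraically closed field, a non-split conflation
`ξ : w' → w → w''` yields a conflation `w' ⊕ w'' → w ⊕ w'' → w''`, and
`dim End_W(w) < dim End_W(w' ⊕ w'')`. -/
theorem stmt6
    (k A W : Type) [Field k] [IsAlgClosed k] [Ring A] [Algebra k A] [FiniteDimensional k A]
    [AddCommGroup W] [Module k W] [Module A W] [Module Aᵐᵒᵖ W]
    [SMulCommClass A Aᵐᵒᵖ W] [IsScalarTower k A W] [FiniteDimensional k W]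
    (hcentral : ∀ (c : k) (x : W), MulOpposite.op (algebraMap k A c) • x = c • x)
    (P P' P'' : Type)
    [AddCommGroup P] [Module k P] [Module A P] [IsScalarTower k A P]
    [AddCommGroup P'] [Module k P'] [Module A P'] [IsScalarTower k A P']
    [AddCommGroup P''] [Module k P''] [Module A P''] [IsScalarTower k A P'']
    (hPfg : Module.Finite A P) (hPproj : Module.Projective A P)
    (hP'fg : Module.Finite A P') (hP'proj : Module.Projective A P')
    (hP''fg : Module.Finite A P'') (hP''proj : Module.Projective A P'')
    (w : P →ₗ[k] WT k A W P) (hw : IsEl k A W w)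
    (w' : P' →ₗ[k] WT k A W P') (hw' : IsEl k A W w')
    (w'' : P'' →ₗ[k] WT k A W P'') (hw'' : IsEl k A W w'')
    (α : P' →ₗ[k] P) (hα : α ∈ HomW k A W w' w)
    (β : P →ₗ[k] P'') (hβ : β ∈ HomW k A W w w'')
    (hainj : Function.Injective α) (hbsurj : Function.Surjective β)
    (hexact : LinearMap.range α = LinearMap.ker β)
    (hnonsplit : ¬ ∃ α' : P →ₗ[k] P', α' ∈ HomW k A W w w' ∧ α'.comp α = LinearMap.id) :
    (∃ (γ : (P' × P'') →ₗ[k] P × P'') (δ : (P × P'') →ₗ[k] P''),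
      γ ∈ HomW k A W (dsumEl k A W w' w'') (dsumEl k A W w w'') ∧
      δ ∈ HomW k A W (dsumEl k A W w w'') w'' ∧
      Function.Injective γ ∧ Function.Surjective δ ∧
      LinearMap.range γ = LinearMap.ker δ) ∧
    Module.finrank k (HomW k A W w w)
      < Module.finrank k (HomW k A W (dsumEl k A W w' w'') (dsumEl k A W w' w'')) :=
  stmt6_general k A W P P' P'' hPfg hP'fg hP''fg hP''proj w w' w'' α hα β hβ hainj hbsurj hexact
    hnonsplit
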